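/- arXiv:2111.07512 — 3 statements merged into one kernel-verified Lean document; each statement's English description precedes it below -/
import Mathlib

section
/- Let B be strictly upper triangular with positive diagonal noise variances σⱼ², and let Θ = (I−B)Ω⁻¹(I−B)ᵀ. Let j be a terminal node (no children) and let U be any subset of indices not containing j. Then the (j,j) entry of the Schur complement Θ_{S,S} − Θ_{S,U}(Θ_{U,U})⁻¹Θ_{U,S} (where S = [p]\U) equals 1/σ²_{S,j} where σ²_{S,j} = σⱼ⁴ (σⱼ² − B_{U,j}ᵀ (Θ_{U,U})⁻¹ B_{U,j})⁻¹, using row-j restriction B_{U,j} = (Bᵤⱼ)_{u∈U}. -/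
open Matrix BigOperators

/-- Submatrix of a square matrix on row set `S` and column set `T`. -/
def msub {p : ℕ} (M : Matrix (Fin p) (Fin p) ℝ) (S T : Finset (Fin p)) :
    Matrix {x // x ∈ S} {x // x ∈ T} ℝ :=
  M.submatrix (·.val) (·.val)

/-- Restricted-SEM noise variance of a terminal node: the (j,j) entry of the Schur
complement equals the inverse of σ²_{S,j} = σⱼ⁴ (σⱼ² − B_{U,j}ᵀ (Θ_{U,U})⁻¹ B_{U,j})⁻¹. -/
theorem restricted_noise_variance_terminal {p : ℕ} (B : Matrix (Fin p) (Fin p) ℝ)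
    (hB : ∀ i j : Fin p, j ≤ i → B i j = 0)
    (σsq : Fin p → ℝ) (hσ : ∀ j, 0 < σsq j)
    (Θ : Matrix (Fin p) (Fin p) ℝ)
    (hΘ : Θ = (1 - B) * (Matrix.diagonal σsq)⁻¹ * (1 - B)ᵀ)
    (j : Fin p) (hterm : ∀ k, B j k = 0)
    (U : Finset (Fin p)) (hjU : j ∉ U) :
    (msub Θ Uᶜ Uᶜ - msub Θ Uᶜ U * (msub Θ U U)⁻¹ * msub Θ U Uᶜ)
        ⟨j, Finset.mem_compl.mpr hjU⟩ ⟨j, Finset.mem_compl.mpr hjU⟩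
      = (σsq j ^ 2 *
          (σsq j -
            (fun u : {x // x ∈ U} => B u.val j) ⬝ᵥ
              (msub Θ U U)⁻¹.mulVec (fun u : {x // x ∈ U} => B u.val j))⁻¹)⁻¹ := by
  have hs : σsq j ≠ 0 := (hσ j).ne'
  have hD : (Matrix.diagonal σsq)⁻¹ = Matrix.diagonal (fun i => (σsq i)⁻¹) := by
    apply Matrix.inv_eq_right_inv
    rw [Matrix.diagonal_mul_diagonal,
      show (fun i => σsq i * (σsq i)⁻¹) = fun _ => (1:ℝ) from
        funext fun i => mul_inv_cancel₀ (hσ i).ne',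
      Matrix.diagonal_one]
  have hcol : ∀ i, Θ i j = ((1 : Matrix (Fin p) (Fin p) ℝ) i j - B i j) * (σsq j)⁻¹ := by
    intro i
    rw [hΘ, hD, Matrix.mul_apply]
    have h1 : ∀ k, (1 - B)ᵀ k j = if j = k then 1 else 0 := by
      intro k
      simp [Matrix.transpose_apply, Matrix.sub_apply, Matrix.one_apply, hterm k]
    calc ∑ k, ((1 - B) * Matrix.diagonal fun i => (σsq i)⁻¹) i k * (1 - B)ᵀ k j
        = ∑ k, ((1 - B) * Matrix.diagonal fun i => (σsq i)⁻¹) i k *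
            (if j = k then 1 else 0) := by
          refine Finset.sum_congr rfl fun k _ => by rw [h1]
      _ = ((1 - B) * Matrix.diagonal fun i => (σsq i)⁻¹) i j := by simp
      _ = ((1 : Matrix (Fin p) (Fin p) ℝ) i j - B i j) * (σsq j)⁻¹ := by
          rw [Matrix.mul_diagonal, Matrix.sub_apply]
  have h2 : ∀ k, ((1 - B) * Matrix.diagonal fun i => (σsq i)⁻¹) j k =
      if k = j then (σsq j)⁻¹ else 0 := by
    intro k
    rw [Matrix.mul_diagonal, Matrix.sub_apply, Matrix.one_apply, hterm k]
    by_cases h : j = k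
    · subst h; simp
    · simp [h, Ne.symm h]
  have hrow : ∀ i, Θ j i = ((1 : Matrix (Fin p) (Fin p) ℝ) i j - B i j) * (σsq j)⁻¹ := by
    intro i
    rw [hΘ, hD, Matrix.mul_apply]
    calc ∑ k, ((1 - B) * Matrix.diagonal fun i => (σsq i)⁻¹) j k * (1 - B)ᵀ k i
        = ∑ k, (if k = j then (σsq j)⁻¹ else 0) * (1 - B)ᵀ k i := by
          refine Finset.sum_congr rfl fun k _ => by rw [h2]
      _ = (σsq j)⁻¹ * (1 - B)ᵀ j i := by simp
      _ = ((1 : Matrix (Fin p) (Fin p) ℝ) i j - B i j) * (σsq j)⁻¹ := by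
          rw [Matrix.transpose_apply, Matrix.sub_apply]; ring
  set M := (msub Θ U U)⁻¹ with hM
  set b : {x // x ∈ U} → ℝ := fun u => B u.val j with hb
  set t : ℝ := b ⬝ᵥ M.mulVec b with ht
  have hΘjj : Θ j j = (σsq j)⁻¹ := by
    rw [hcol j]; simp [Matrix.one_apply, hterm]
  have hΘju : ∀ u : {x // x ∈ U}, Θ j u.val = -b u * (σsq j)⁻¹ := by
    intro u
    have huj : u.val ≠ j := fun h => hjU (h ▸ u.prop)
    rw [hrow u.val, Matrix.one_apply_ne huj]; ring
  have hΘuj : ∀ u : {x // x ∈ U}, Θ u.val j = -b u * (σsq j)⁻¹ := by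
    intro u
    have huj : u.val ≠ j := fun h => hjU (h ▸ u.prop)
    rw [hcol u.val, Matrix.one_apply_ne huj]; ring
  have e1 : (msub Θ Uᶜ U * M * msub Θ U Uᶜ)
      ⟨j, Finset.mem_compl.mpr hjU⟩ ⟨j, Finset.mem_compl.mpr hjU⟩
      = ∑ u, ∑ v, (σsq j)⁻¹ * (σsq j)⁻¹ * (b v * M v u * b u) := by
    rw [Matrix.mul_apply]
    refine Finset.sum_congr rfl fun u _ => ?_
    simp only [msub, Matrix.submatrix_apply, Matrix.mul_apply]
    rw [hΘuj u, Finset.sum_mul]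
    refine Finset.sum_congr rfl fun v _ => ?_
    rw [hΘju v]; ring
  have e2 : (σsq j)⁻¹ * (σsq j)⁻¹ * t = ∑ v, ∑ u, (σsq j)⁻¹ * (σsq j)⁻¹ * (b v * M v u * b u) := by
    rw [ht]
    simp only [dotProduct, Matrix.mulVec, dotProduct, Finset.mul_sum]
    refine Finset.sum_congr rfl fun v _ => ?_
    refine Finset.sum_congr rfl fun u _ => ?_
    ring
  have key : (msub Θ Uᶜ U * M * msub Θ U Uᶜ)
      ⟨j, Finset.mem_compl.mpr hjU⟩ ⟨j, Finset.mem_compl.mpr hjU⟩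
      = (σsq j)⁻¹ * (σsq j)⁻¹ * t := e1.trans (Finset.sum_comm.trans e2.symm)
  have hLHS : (msub Θ Uᶜ Uᶜ - msub Θ Uᶜ U * M * msub Θ U Uᶜ)
      ⟨j, Finset.mem_compl.mpr hjU⟩ ⟨j, Finset.mem_compl.mpr hjU⟩
      = (σsq j)⁻¹ - (σsq j)⁻¹ * (σsq j)⁻¹ * t := by
    rw [Matrix.sub_apply, key,
      show (msub Θ Uᶜ Uᶜ) ⟨j, Finset.mem_compl.mpr hjU⟩ ⟨j, Finset.mem_compl.mpr hjU⟩
        = Θ j j from rfl, hΘjj]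
  rw [hLHS, mul_inv, inv_inv, sq, mul_inv, mul_sub, mul_assoc (σsq j)⁻¹ (σsq j)⁻¹ (σsq j),
    inv_mul_cancel₀ hs, mul_one]
end

section
/- Let Σ⁽ᵐ⁾ = (I−B)⁻ᵀ Ωₘ (I−B)⁻¹ for m = 1,2, with B strictly upper triangular and Ωₘ diagonal positive. If node j satisfies: for every ancestor l of j (including l = j), (Ω₁)ₗₗ = (Ω₂)ₗₗ, then Σⱼⱼ⁽¹⁾ = Σⱼⱼ⁽²⁾. -/
open Matrix BigOperators

/-- The marginal variance of a node is unchanged if none of its ancestors (including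
itself) is intervened. -/
theorem variance_invariant_of_no_intervened_ancestor {p : ℕ}
    (B : Matrix (Fin p) (Fin p) ℝ) (hB : ∀ i j : Fin p, j ≤ i → B i j = 0)
    (ω₁ ω₂ : Fin p → ℝ) (hω₁ : ∀ l, 0 < ω₁ l) (hω₂ : ∀ l, 0 < ω₂ l)
    (Cov₁ Cov₂ : Matrix (Fin p) (Fin p) ℝ)
    (hCov₁ : Cov₁ = ((1 - B)⁻¹)ᵀ * Matrix.diagonal ω₁ * (1 - B)⁻¹)
    (hCov₂ : Cov₂ = ((1 - B)⁻¹)ᵀ * Matrix.diagonal ω₂ * (1 - B)⁻¹)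
    (j : Fin p)
    (hanc : ∀ l, (1 - B)⁻¹ l j ≠ 0 → ω₁ l = ω₂ l) :
    Cov₁ j j = Cov₂ j j := by
  subst hCov₁ hCov₂
  simp only [Matrix.mul_apply, Matrix.transpose_apply, Matrix.diagonal_apply,
    Finset.sum_mul]
  refine Finset.sum_congr rfl fun k _ => Finset.sum_congr rfl fun l _ => ?_
  by_cases h : (1 - B)⁻¹ l j = 0
  · by_cases hlk : l = k
    · subst hlk; simp [h]
    · simp [hlk]
  · rw [hanc l h]
end

section
/- Let Σ⁽ᵐ⁾ = (I−B)⁻ᵀΩₘ(I−B)⁻¹ for m = 1,2 with B strictly upper triangular and Ωₘ diagonal positive, and let I = {i : (Ω₁)ᵢᵢ ≠ (Ω₂)ᵢᵢ}. If i ∈ I and every strict ancestor l of i satisfies (Ω₁)ₗₗ = (Ω₂)ₗₗ, then Σᵢᵢ⁽¹⁾ ≠ Σᵢᵢ⁽²⁾. -/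
open Matrix BigOperators

/-- An intervened node whose strict ancestors are all non-intervened has a changed
marginal variance. -/
theorem variance_changed_of_intervened {p : ℕ}
    (B : Matrix (Fin p) (Fin p) ℝ) (hB : ∀ i j : Fin p, j ≤ i → B i j = 0)
    (ω₁ ω₂ : Fin p → ℝ) (hω₁ : ∀ l, 0 < ω₁ l) (hω₂ : ∀ l, 0 < ω₂ l)
    (Cov₁ Cov₂ : Matrix (Fin p) (Fin p) ℝ)
    (hCov₁ : Cov₁ = ((1 - B)⁻¹)ᵀ * Matrix.diagonal ω₁ * (1 - B)⁻¹)
    (hCov₂ : Cov₂ = ((1 - B)⁻¹)ᵀ * Matrix.diagonal ω₂ * (1 - B)⁻¹)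
    (i : Fin p) (hi : ω₁ i ≠ ω₂ i)
    (hanc : ∀ l, l ≠ i → (1 - B)⁻¹ l i ≠ 0 → ω₁ l = ω₂ l) :
    Cov₁ i i ≠ Cov₂ i i := by
  set A := (1 - B)⁻¹ with hA
  -- (1 - B) is upper triangular
  have htri : (1 - B).BlockTriangular id := by
    intro a b hab
    have hne : a ≠ b := ne_of_gt hab
    simp [Matrix.sub_apply, Matrix.one_apply_ne hne, hB a b (le_of_lt hab)]
  have hdet : (1 - B).det = 1 := by
    rw [Matrix.det_of_upperTriangular htri]
    have : ∀ k : Fin p, (1 - B) k k = 1 := by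
      intro k; simp [Matrix.sub_apply, hB k k le_rfl]
    simp [this]
  haveI : Invertible (1 - B) := (1 - B).invertibleOfIsUnitDet (by simp [hdet])
  have hAtri : A.BlockTriangular id := blockTriangular_inv_of_blockTriangular htri
  have hmul : (1 - B) * A = 1 := mul_nonsing_inv _ (by simp [hdet])
  -- A i i = 1
  have hAii : A i i = 1 := by
    have h1 : ((1 - B) * A) i i = 1 := by rw [hmul]; simp
    rw [Matrix.mul_apply] at h1
    rw [Finset.sum_eq_single i] at h1
    · have : (1 - B) i i = 1 := by simp [Matrix.sub_apply, hB i i le_rfl]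
      rwa [this, one_mul] at h1
    · intro b _ hbne
      rcases lt_or_gt_of_ne hbne with h | h
      · have : (1 - B) i b = 0 := htri (by simpa using h)
        simp [this]
      · have : A b i = 0 := hAtri (by simpa using h)
        simp [this]
    · intro h; exact absurd (Finset.mem_univ i) h
  -- Cov formula
  have hform : ∀ ω : Fin p → ℝ,
      (Aᵀ * Matrix.diagonal ω * A) i i = ∑ l, A l i * ω l * A l i := by
    intro ω
    rw [Matrix.mul_apply]
    congr 1; ext l
    rw [Matrix.mul_diagonal, Matrix.transpose_apply]
  intro hcontra
  rw [hCov₁, hCov₂, hform, hform] at hcontra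
  have hdiff : (∑ l, A l i * ω₁ l * A l i) - (∑ l, A l i * ω₂ l * A l i)
      = ω₁ i - ω₂ i := by
    rw [← Finset.sum_sub_distrib]
    rw [Finset.sum_eq_single i]
    · rw [hAii]; ring
    · intro l _ hlne
      by_cases hAl : A l i = 0
      · simp [hAl]
      · rw [hanc l hlne hAl]; ring
    · intro h; exact absurd (Finset.mem_univ i) h
  rw [hcontra, sub_self] at hdiff
  exact hi (by linarith)
end
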